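/- For n ≥ 1 and 0 ≤ q < 1, the commutator ideal I_n of the quantum sphere algebra A(S^{2n+1}_q) equals the two-sided *-ideal generated by the generators z₁, …, z_n. -/

import Mathlib

noncomputable section

namespace QAlg

/-- Generators of a free *-algebra: `inl i` is the generator `z i`, and
`inr i` is its formal adjoint `(z i)*`. -/
abbrev Gen (X : Type) := X ⊕ X

/-- The free algebra on the doubled generating set, realized as the monoid
algebra of the free monoid. -/
abbrev F (X : Type) := MonoidAlgebra ℂ (FreeMonoid (Gen X))

/-- The *-operation on words: reverse the word and exchange the two copies
of the generators. -/
def wordStar {X : Type} (w : FreeMonoid (Gen X)) : FreeMonoid (Gen X) :=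
  FreeMonoid.ofList (((FreeMonoid.toList w).map Sum.swap).reverse)

lemma wordStar_mul {X : Type} (w v : FreeMonoid (Gen X)) :
    wordStar (w * v) = wordStar v * wordStar w := by
  simp [wordStar, FreeMonoid.toList_mul, FreeMonoid.ofList_append]

lemma wordStar_wordStar {X : Type} (w : FreeMonoid (Gen X)) : wordStar (wordStar w) = w := by
  simp [wordStar, List.map_reverse, List.map_map, Sum.swap_swap_eq]

/-- The canonical conjugate-linear antimultiplicative involution on the free
algebra `F X`, determined by `star (z i) = (z i)*` and complex conjugation
on scalars. -/
def starF {X : Type} (f : F X) : F X :=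
  Finsupp.sum f.coeff fun w c => MonoidAlgebra.single (wordStar w) ((starRingEnd ℂ) c)

lemma starF_single {X : Type} (w : FreeMonoid (Gen X)) (c : ℂ) :
    starF (MonoidAlgebra.single w c) = MonoidAlgebra.single (wordStar w) ((starRingEnd ℂ) c) := by
  classical
  unfold starF
  rw [MonoidAlgebra.coeff_single]
  refine Finsupp.sum_single_index ?_
  simp

lemma starF_zero {X : Type} : starF (0 : F X) = 0 := by
  unfold starF
  exact Finsupp.sum_zero_index

lemma starF_add {X : Type} (f g : F X) : starF (f + g) = starF f + starF g := by
  classical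
  unfold starF
  rw [MonoidAlgebra.coeff_add]
  refine Finsupp.sum_add_index' (fun w => by simp) (fun w c₁ c₂ => by
    simp [map_add, MonoidAlgebra.single_add])

lemma starF_single_mul {X : Type} (w : FreeMonoid (Gen X)) (c : ℂ) (g : F X) :
    starF (MonoidAlgebra.single w c * g) = starF g * starF (MonoidAlgebra.single w c) := by
  classical
  induction g using MonoidAlgebra.induction with
  | zero => simp [starF_zero]
  | single_add v d g _ _ ihg =>
    rw [mul_add, starF_add, starF_add, add_mul, ihg]
    congr 1
    rw [MonoidAlgebra.single_mul_single, starF_single, starF_single, starF_single,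
      MonoidAlgebra.single_mul_single, wordStar_mul, map_mul, mul_comm]

lemma starF_mul {X : Type} (f g : F X) : starF (f * g) = starF g * starF f := by
  classical
  induction f using MonoidAlgebra.induction with
  | zero => simp [starF_zero]
  | single_add w c f _ _ ih =>
    rw [add_mul, starF_add, starF_add, ih, mul_add, starF_single_mul]

lemma starF_starF {X : Type} (f : F X) : starF (starF f) = f := by
  classical
  induction f using MonoidAlgebra.induction with
  | zero => simp [starF_zero]
  | single_add w c f _ _ ih =>
    rw [starF_add, starF_add, ih, starF_single, starF_single, wordStar_wordStar,
      Complex.conj_conj]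

/-- The free *-algebra structure on `F X`. -/
def starRingF (X : Type) : StarRing (F X) where
  star := starF
  star_involutive := starF_starF
  star_mul := starF_mul
  star_add := starF_add

/-- The generator `z i` inside the free *-algebra. -/
def zF {X : Type} (i : X) : F X := MonoidAlgebra.of ℂ _ (FreeMonoid.of (Sum.inl i))

/-- The formal adjoint `(z i)*` inside the free *-algebra. -/
def zsF {X : Type} (i : X) : F X := MonoidAlgebra.of ℂ _ (FreeMonoid.of (Sum.inr i))

/-- The defining relations of the Vaksman-Soibelman quantum sphere
`S^{2n+1}_q` (with `zsF i` playing the role of `(z i)*`), together with their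
images under the *-operation, so that the quotient below is the universal
unital *-algebra on the generators `z 0, ..., z n` with these relations. -/
inductive srel (n : ℕ) (q : ℝ) : F (Fin (n + 1)) → F (Fin (n + 1)) → Prop
  | comm_zz {i j : Fin (n + 1)} (h : i < j) :
      srel n q (zF j * zF i) ((q : ℂ) • (zF i * zF j))
  | comm_zsz {i j : Fin (n + 1)} (h : i ≠ j) :
      srel n q (zsF i * zF j) ((q : ℂ) • (zF j * zsF i))
  | ccr (i : Fin (n + 1)) :
      srel n q (zsF i * zF i)
        (zF i * zsF i + ((1 - q ^ 2 : ℝ) : ℂ) • ∑ j ∈ Finset.Ioi i, zF j * zsF j)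
  | sphere_eq : srel n q (∑ j, zF j * zsF j) 1
  | star_rel {a b} : srel n q a b → srel n q (starF a) (starF b)

/-- The coordinate *-algebra `A(S^{2n+1}_q)` of the quantum sphere. -/
abbrev Sphere (n : ℕ) (q : ℝ) := RingQuot (srel n q)

noncomputable instance (n : ℕ) (q : ℝ) : StarRing (Sphere n q) :=
  @RingQuot.starRing _ _ (starRingF _) (srel n q) (fun _ _ h => srel.star_rel h)

/-- The generator `z i` of the quantum sphere algebra. -/
def z (n : ℕ) (q : ℝ) (i : Fin (n + 1)) : Sphere n q :=
  RingQuot.mkAlgHom ℂ (srel n q) (zF i)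

/-- The commutator ideal of a ring: the two-sided ideal generated by all
commutators `a * b - b * a`.  For a *-algebra this coincides with the
two-sided *-ideal generated by the commutators, since the star of a
commutator is again a commutator. -/
def commutatorIdeal (A : Type) [Ring A] : TwoSidedIdeal A :=
  TwoSidedIdeal.span {x | ∃ a b : A, x = a * b - b * a}

end QAlg

/-!
For `i < j` the relation `z j * z i = q • (z i * z j)` exhibits `(q - 1) • (z i * z j)` as a
commutator, and the relation for `star (z i) * z i` exhibits
`(1 - q ^ 2) • ∑ j > i, z j * star (z j)` as one; as `q ≠ 1` and `q ^ 2 ≠ 1`, both `z i * z j` and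
these sums lie in the commutator ideal. For `i ≠ 0`, expanding `z i = z i * 1` by the sphere
relation `1 = z 0 * star (z 0) + ∑ j > 0, z j * star (z j)` puts `z i`, hence also `star (z i)`,
into the commutator ideal.

Conversely, modulo the ideal `J` generated by the `z i` and `star (z i)` with `i ≠ 0`, the
algebra is generated by `z 0` and `star (z 0)`, whose commutator
`(1 - q ^ 2) • ∑ j > 0, z j * star (z j)` lies in `J`; so all commutators lie in `J`.
-/

namespace TwoSidedIdeal

variable {R A : Type*} [CommSemiring R] [Ring A] [Algebra R A]

lemma smul_mem_of_mem (I : TwoSidedIdeal A) (c : R) {x : A} (hx : x ∈ I) : c • x ∈ I := by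
  rw [Algebra.smul_def]
  exact I.mul_mem_left _ _ hx

lemma mem_of_smul_mem {K : Type*} [Field K] [Algebra K A] (I : TwoSidedIdeal A) {c : K}
    (hc : c ≠ 0) {x : A} (hx : c • x ∈ I) : x ∈ I := by
  simpa [smul_smul, inv_mul_cancel₀ hc] using I.smul_mem_of_mem c⁻¹ hx

end TwoSidedIdeal

lemma MonoidAlgebra.adjoin_image_of_closure_eq_top {R M : Type*} [CommSemiring R] [Monoid M]
    {S : Set M} (hS : Submonoid.closure S = ⊤) : Algebra.adjoin R (of R M '' S) = ⊤ := by
  have of_mem : ∀ m, of R M m ∈ Algebra.adjoin R (of R M '' S) := by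
    intro m
    induction hS ▸ Submonoid.mem_top m using Submonoid.closure_induction with
    | mem m hm => exact Algebra.subset_adjoin (Set.mem_image_of_mem _ hm)
    | one => rw [map_one]; exact one_mem _
    | mul x y _ _ hx hy => rw [map_mul]; exact mul_mem hx hy
  refine eq_top_iff.2 fun f _ => Algebra.adjoin_le ?_ (mem_adjoin_support f)
  rintro _ ⟨m, -, rfl⟩
  exact of_mem m

namespace QAlg

section Commutators

variable {A : Type} [Ring A]

lemma commutator_mem_commutatorIdeal (a b : A) : a * b - b * a ∈ commutatorIdeal A :=
  TwoSidedIdeal.subset_span ⟨a, b, rfl⟩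

lemma star_mem_commutatorIdeal [StarRing A] {x : A} (hx : x ∈ commutatorIdeal A) :
    star x ∈ commutatorIdeal A := by
  induction hx using TwoSidedIdeal.span_induction with
  | mem x hx =>
    obtain ⟨a, b, rfl⟩ := hx
    rw [star_sub, star_mul, star_mul]
    exact commutator_mem_commutatorIdeal (star b) (star a)
  | zero => rw [star_zero]; exact TwoSidedIdeal.zero_mem _
  | add x y _ _ hx hy => rw [star_add]; exact TwoSidedIdeal.add_mem _ hx hy
  | neg x _ hx => rw [star_neg]; exact TwoSidedIdeal.neg_mem _ hx
  | left_absorb a x _ hx => rw [star_mul]; exact TwoSidedIdeal.mul_mem_right _ _ _ hx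
  | right_absorb b x _ hx => rw [star_mul]; exact TwoSidedIdeal.mul_mem_left _ _ _ hx

variable {R : Type*} [CommSemiring R] [Algebra R A]

lemma commutator_mem_of_mem_adjoin (I : TwoSidedIdeal A) {s : Set A} {a b : A}
    (hb : b ∈ Algebra.adjoin R s) (h : ∀ c ∈ s, a * c - c * a ∈ I) : a * b - b * a ∈ I := by
  induction hb using Algebra.adjoin_induction with
  | mem c hc => exact h c hc
  | algebraMap r => rw [Algebra.commutes, sub_self]; exact I.zero_mem
  | add x y _ _ hx hy =>
    convert I.add_mem hx hy using 1
    noncomm_ring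
  | mul x y _ _ hx hy =>
    convert I.add_mem (I.mul_mem_right _ y hx) (I.mul_mem_left x _ hy) using 1
    noncomm_ring

lemma commutatorIdeal_le_of_adjoin_eq_top (I : TwoSidedIdeal A) {s : Set A}
    (hs : Algebra.adjoin R s = ⊤) (h : ∀ a ∈ s, ∀ b ∈ s, a * b - b * a ∈ I) :
    commutatorIdeal A ≤ I := by
  refine TwoSidedIdeal.span_le.2 ?_
  rintro _ ⟨a, b, rfl⟩
  refine commutator_mem_of_mem_adjoin I (hs ▸ Algebra.mem_top) fun c hc => ?_
  rw [← neg_sub]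
  exact I.neg_mem (commutator_mem_of_mem_adjoin I (hs ▸ Algebra.mem_top) (h c hc))

end Commutators

variable {n : ℕ} {q : ℝ}

lemma star_mkAlgHom (f : F (Fin (n + 1))) :
    star (RingQuot.mkAlgHom ℂ (srel n q) f) = RingQuot.mkAlgHom ℂ (srel n q) (starF f) := by
  rw [← AlgHom.coe_toRingHom, RingQuot.mkAlgHom_coe, RingQuot.mkRingHom_def]
  rfl

lemma starF_zF (i : Fin (n + 1)) : starF (zF i) = zsF i := by
  simp [zF, zsF, starF_single, wordStar]

lemma star_z (i : Fin (n + 1)) : star (z n q i) = RingQuot.mkAlgHom ℂ (srel n q) (zsF i) := by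
  rw [z, star_mkAlgHom, starF_zF]

lemma z_mul_z_of_lt {i j : Fin (n + 1)} (h : i < j) :
    z n q j * z n q i = (q : ℂ) • (z n q i * z n q j) := by
  simpa only [z, map_mul, map_smul] using
    RingQuot.mkAlgHom_rel ℂ (srel.comm_zz (n := n) (q := q) h)

lemma star_z_mul_z_self (i : Fin (n + 1)) :
    star (z n q i) * z n q i = z n q i * star (z n q i) +
      ((1 - q ^ 2 : ℝ) : ℂ) • ∑ j ∈ Finset.Ioi i, z n q j * star (z n q j) := by
  simpa only [z, star_mkAlgHom, starF_zF, map_mul, map_add, map_smul, map_sum] using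
    RingQuot.mkAlgHom_rel ℂ (srel.ccr (n := n) (q := q) i)

lemma sum_z_mul_star_z : ∑ j, z n q j * star (z n q j) = 1 := by
  simpa only [z, star_mkAlgHom, starF_zF, map_mul, map_sum, map_one] using
    RingQuot.mkAlgHom_rel ℂ (srel.sphere_eq (n := n) (q := q))

lemma adjoin_z_union_star_z_eq_top :
    Algebra.adjoin ℂ (Set.range (z n q) ∪ Set.range (star ∘ z n q)) = ⊤ := by
  have hgen : RingQuot.mkAlgHom ℂ (srel n q) '' (MonoidAlgebra.of ℂ _ '' Set.range FreeMonoid.of)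
      ⊆ Set.range (z n q) ∪ Set.range (star ∘ z n q) := by
    rintro _ ⟨_, ⟨_, ⟨i | i, rfl⟩, rfl⟩, rfl⟩
    · exact Or.inl ⟨i, rfl⟩
    · exact Or.inr ⟨i, star_z i⟩
  refine eq_top_iff.2 (le_trans ?_ (Algebra.adjoin_mono hgen))
  rw [Algebra.adjoin_image,
    MonoidAlgebra.adjoin_image_of_closure_eq_top FreeMonoid.closure_range_of, Algebra.map_top,
    (AlgHom.range_eq_top _).2 (RingQuot.mkAlgHom_surjective ℂ _)]

lemma z_mul_z_mem_commutatorIdeal (hq1 : q < 1) {i j : Fin (n + 1)} (h : i < j) :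
    z n q i * z n q j ∈ commutatorIdeal (Sphere n q) := by
  have hq : (q : ℂ) - 1 ≠ 0 := sub_ne_zero.2 (by exact_mod_cast hq1.ne)
  refine (commutatorIdeal _).mem_of_smul_mem hq ?_
  have := commutator_mem_commutatorIdeal (z n q j) (z n q i)
  rw [z_mul_z_of_lt h] at this
  convert this using 1
  module

lemma sum_Ioi_z_mul_star_z_mem_commutatorIdeal (hq0 : 0 ≤ q) (hq1 : q < 1) (i : Fin (n + 1)) :
    ∑ j ∈ Finset.Ioi i, z n q j * star (z n q j) ∈ commutatorIdeal (Sphere n q) := by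
  have hq : ((1 - q ^ 2 : ℝ) : ℂ) ≠ 0 := Complex.ofReal_ne_zero.2 (by nlinarith : 0 < 1 - q ^ 2).ne'
  refine (commutatorIdeal _).mem_of_smul_mem hq ?_
  have := commutator_mem_commutatorIdeal (star (z n q i)) (z n q i)
  rwa [star_z_mul_z_self, add_sub_cancel_left] at this

lemma z_mem_commutatorIdeal (hq0 : 0 ≤ q) (hq1 : q < 1) {i : Fin (n + 1)} (hi : i ≠ 0) :
    z n q i ∈ commutatorIdeal (Sphere n q) := by
  have h0i : 0 < i := (Fin.pos_iff_ne_zero' i).2 hi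
  have hzz : z n q i * z n q 0 ∈ commutatorIdeal (Sphere n q) := by
    rw [z_mul_z_of_lt h0i]
    exact (commutatorIdeal _).smul_mem_of_mem _ (z_mul_z_mem_commutatorIdeal hq1 h0i)
  have hunit : z n q 0 * star (z n q 0) + ∑ j ∈ Finset.Ioi 0, z n q j * star (z n q j) = 1 := by
    rw [Fin.sum_Ioi_zero, ← sum_z_mul_star_z (n := n) (q := q), Fin.sum_univ_succ]
  rw [← mul_one (z n q i), ← hunit, mul_add, ← mul_assoc]
  exact TwoSidedIdeal.add_mem _ (TwoSidedIdeal.mul_mem_right _ _ _ hzz)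
    (TwoSidedIdeal.mul_mem_left _ _ _ (sum_Ioi_z_mul_star_z_mem_commutatorIdeal hq0 hq1 0))

lemma commutatorIdeal_le_span_z_star_z :
    commutatorIdeal (Sphere n q) ≤ TwoSidedIdeal.span
      ({x | ∃ i : Fin (n + 1), i ≠ 0 ∧ x = z n q i} ∪
        {x | ∃ i : Fin (n + 1), i ≠ 0 ∧ x = star (z n q i)}) := by
  set gens : Set (Sphere n q) := {x | ∃ i : Fin (n + 1), i ≠ 0 ∧ x = z n q i} ∪
    {x | ∃ i : Fin (n + 1), i ≠ 0 ∧ x = star (z n q i)}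
  set J := TwoSidedIdeal.span gens
  have h00 : star (z n q 0) * z n q 0 - z n q 0 * star (z n q 0) ∈ J := by
    rw [star_z_mul_z_self, add_sub_cancel_left]
    refine J.smul_mem_of_mem _ (TwoSidedIdeal.finsetSum_mem _ _ _ fun j hj => ?_)
    exact J.mul_mem_right _ _
      (TwoSidedIdeal.subset_span (Or.inl ⟨j, (Finset.mem_Ioi.1 hj).ne', rfl⟩))
  refine commutatorIdeal_le_of_adjoin_eq_top (R := ℂ) J
    (s := insert (z n q 0) (insert (star (z n q 0)) gens)) ?_ ?_
  · refine eq_top_iff.2 (adjoin_z_union_star_z_eq_top.ge.trans (Algebra.adjoin_mono ?_))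
    rintro _ (⟨i, rfl⟩ | ⟨i, rfl⟩) <;> rcases eq_or_ne i 0 with rfl | hi
    exacts [Or.inl rfl, Or.inr (Or.inr (Or.inl ⟨i, hi, rfl⟩)), Or.inr (Or.inl rfl),
      Or.inr (Or.inr (Or.inr ⟨i, hi, rfl⟩))]
  · rintro a (rfl | rfl | ha) b (rfl | rfl | hb)
    all_goals first
      | exact J.sub_mem (J.mul_mem_right _ _ (TwoSidedIdeal.subset_span ha))
          (J.mul_mem_left _ _ (TwoSidedIdeal.subset_span ha))
      | exact J.sub_mem (J.mul_mem_left _ _ (TwoSidedIdeal.subset_span hb))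
          (J.mul_mem_right _ _ (TwoSidedIdeal.subset_span hb))
      | rw [sub_self]; exact J.zero_mem
      | exact h00
      | rw [← neg_sub]; exact J.neg_mem h00

theorem commutatorIdeal_sphere_eq_span_general (n : ℕ) (q : ℝ)
    (hq0 : 0 ≤ q) (hq1 : q < 1) :
    commutatorIdeal (Sphere n q) =
      TwoSidedIdeal.span
        ({x | ∃ i : Fin (n + 1), i ≠ 0 ∧ x = z n q i} ∪
         {x | ∃ i : Fin (n + 1), i ≠ 0 ∧ x = star (z n q i)}) := by
  refine le_antisymm commutatorIdeal_le_span_z_star_z (TwoSidedIdeal.span_le.2 ?_)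
  rintro _ (⟨i, hi, rfl⟩ | ⟨i, hi, rfl⟩)
  · exact z_mem_commutatorIdeal hq0 hq1 hi
  · exact star_mem_commutatorIdeal (z_mem_commutatorIdeal hq0 hq1 hi)

/-- For `n ≥ 1` and `0 ≤ q < 1`, the commutator ideal of `A(S^{2n+1}_q)`
equals the two-sided *-ideal generated by `z 1, ..., z n`. -/
theorem commutatorIdeal_sphere_eq_span (n : ℕ) (hn : 1 ≤ n) (q : ℝ)
    (hq0 : 0 ≤ q) (hq1 : q < 1) :
    commutatorIdeal (Sphere n q) =
      TwoSidedIdeal.span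
        ({x | ∃ i : Fin (n + 1), i ≠ 0 ∧ x = z n q i} ∪
         {x | ∃ i : Fin (n + 1), i ≠ 0 ∧ x = star (z n q i)}) :=
  commutatorIdeal_sphere_eq_span_general n q hq0 hq1

end QAlg
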